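/- Let H be a complex Hilbert space and Q ∈ B(H) an idempotent. Then there exists V ∈ B(H) such that VV* = s(Q) and V*V = P_{ran Q}; in particular, the supplementary projection s(Q) and the range projection P_{ran Q} are Murray–von Neumann equivalent in B(H). -/

import Mathlib

/- For an idempotent `Q` on a complex Hilbert space `H`, we define (in `B(H)`):
the orthogonal projection onto the closure of the range of an operator,
the range projection `P_{ran Q} = Q (Q + Q* - 1)⁻¹`,
`|Q*| = (Q Q*)^{1/2}`, its Moore-Penrose inverse
`|Q*|^† = (P_{ran Q} P_{ran Q*} P_{ran Q})^{1/2}`,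
the matched projection `m(Q) = (1/2)(|Q*| + Q*) |Q*|^† (|Q*| + 1)⁻¹ (|Q*| + Q)`,
and the supplementary projection `s(Q) = m(2 P_{ran Q} - Q)`. -/

noncomputable section

namespace QPP

variable {H : Type*} [NormedAddCommGroup H] [InnerProductSpace ℂ H] [CompleteSpace H]

/-- The orthogonal projection onto the closure of the range of `T`, as an element of `B(H)`. -/
def closRangeProj (T : H →L[ℂ] H) : H →L[ℂ] H :=
  letI K := (LinearMap.range (T : H →ₗ[ℂ] H)).topologicalClosure
  haveI : CompleteSpace K :=
    (LinearMap.range (T : H →ₗ[ℂ] H)).isClosed_topologicalClosure.completeSpace_coe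
  K.subtypeL ∘L K.orthogonalProjectionOnto

/-- The range projection `P_{ran Q} = Q (Q + Q* - 1)⁻¹` of an idempotent `Q`.  (For an
idempotent `Q` the operator `Q + Q* - 1` is invertible, so `Ring.inverse` is its inverse.) -/
def rangeProj (Q : H →L[ℂ] H) : H →L[ℂ] H :=
  Q * Ring.inverse (Q + star Q - 1)

/-- `|Q*| = (Q Q*)^{1/2}`. -/
def absStar (Q : H →L[ℂ] H) : H →L[ℂ] H :=
  CFC.sqrt (Q * star Q)

/-- `|Q*|^† = (P_{ran Q} P_{ran Q*} P_{ran Q})^{1/2}`, the Moore-Penrose inverse of `|Q*|`. -/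
def absStarPinv (Q : H →L[ℂ] H) : H →L[ℂ] H :=
  CFC.sqrt (rangeProj Q * rangeProj (star Q) * rangeProj Q)

/-- The matched projection `m(Q) = (1/2)(|Q*| + Q*) |Q*|^† (|Q*| + 1)⁻¹ (|Q*| + Q)`. -/
def matchedProj (Q : H →L[ℂ] H) : H →L[ℂ] H :=
  (2 : ℂ)⁻¹ • ((absStar Q + star Q) * absStarPinv Q * Ring.inverse (absStar Q + 1)
      * (absStar Q + Q))

/-- The supplementary projection `s(Q) = m(2 P_{ran Q} - Q)`. -/
def suppProj (Q : H →L[ℂ] H) : H →L[ℂ] H :=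
  matchedProj (2 * rangeProj Q - Q)

end QPP

/-
Write `N = Q + Q* - 1`. For an idempotent `Q`, `N` intertwines `Q` and `Q*` (`N Q = Q* N`,
`N Q* = Q N`) and `N² = 1 + (Q - Q*)(Q - Q*)*` is invertible, so `N⁻²` commutes with `Q` and `Q*`.
This gives `P_{ran Q} = Q Q* N⁻²` and `|Q*|^† = |Q*| N⁻²`, hence `|Q*|^† |Q*| = P_{ran Q}`.
Since `Q |Q*| = |Q*|`, we have `(|Q*| + Q)(|Q*| + Q*) = 2 |Q*| (|Q*| + 1)`, so
`V = (|Q*| + Q*) (|Q*|^† (|Q*| + 1)⁻¹ / 2)^{1/2}` satisfies `V V* = m(Q)` and `V* V = P_{ran Q}`: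
every matched projection is equivalent to the range projection. Finally, `2 P_{ran Q} - Q` is an
idempotent with the same range projection as `Q`.
-/

open scoped Ring

local postfix:max "⋆" => star

theorem SemiconjBy.ringInverse_symm_left {M₀ : Type*} [MonoidWithZero M₀] {a x y : M₀}
    (h : SemiconjBy a x y) : SemiconjBy a⁻¹ʳ y x := by
  by_cases ha : IsUnit a
  · obtain ⟨u, rfl⟩ := ha
    rw [Ring.inverse_unit]
    exact h.units_inv_symm_left
  · rw [Ring.inverse_non_unit _ ha]
    exact SemiconjBy.zero_left y x

theorem Commute.ringInverse_left {M₀ : Type*} [MonoidWithZero M₀] {a b : M₀}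
    (h : Commute a b) : Commute a⁻¹ʳ b :=
  SemiconjBy.ringInverse_symm_left h

theorem IsIdempotentElem.two_mul_sub {R : Type*} [Ring R] {p q : R} (hq : IsIdempotentElem q)
    (hp : IsIdempotentElem p) (hpq : p * q = q) (hqp : q * p = p) :
    IsIdempotentElem (2 * p - q) := by
  rw [IsIdempotentElem, two_mul]
  simp only [mul_sub, sub_mul, mul_add, add_mul, hp.eq, hq.eq, hpq, hqp]
  abel

section StarRing

variable {R : Type*} [Ring R] [StarRing R] {q : R}

theorem isSelfAdjoint_add_star_sub_one (q : R) : IsSelfAdjoint (q + q⋆ - 1) := by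
  simp [IsSelfAdjoint, add_comm]

namespace IsIdempotentElem

theorem add_star_sub_one_mul_self (hq : IsIdempotentElem q) :
    (q + q⋆ - 1) * (q + q⋆ - 1) = 1 + (q - q⋆) * (q - q⋆)⋆ := by
  simp only [star_sub, star_star, mul_sub, sub_mul, mul_add, add_mul, mul_one, one_mul, hq.eq,
    hq.star.eq]
  abel

theorem mul_add_star_sub_one (hq : IsIdempotentElem q) : q * (q + q⋆ - 1) = q * q⋆ := by
  simp only [mul_sub, mul_add, mul_one, hq.eq]
  abel

theorem semiconjBy_add_star_sub_one (hq : IsIdempotentElem q) :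
    SemiconjBy (q + q⋆ - 1) q q⋆ := by
  simp only [SemiconjBy, mul_sub, sub_mul, mul_add, add_mul, mul_one, one_mul, hq.eq,
    hq.star.eq]
  abel

theorem semiconjBy_add_star_sub_one_star (hq : IsIdempotentElem q) :
    SemiconjBy (q + q⋆ - 1) q⋆ q := by
  simp only [SemiconjBy, mul_sub, sub_mul, mul_add, add_mul, mul_one, one_mul, hq.eq,
    hq.star.eq]
  abel

theorem inverse_add_star_sub_one_mul_star (hq : IsIdempotentElem q) :
    (q + q⋆ - 1)⁻¹ʳ * q⋆ = q * (q + q⋆ - 1)⁻¹ʳ :=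
  hq.semiconjBy_add_star_sub_one.ringInverse_symm_left

theorem inverse_add_star_sub_one_mul (hq : IsIdempotentElem q) :
    (q + q⋆ - 1)⁻¹ʳ * q = q⋆ * (q + q⋆ - 1)⁻¹ʳ :=
  hq.semiconjBy_add_star_sub_one_star.ringInverse_symm_left

theorem commute_inverse_add_star_sub_one_sq (hq : IsIdempotentElem q) :
    Commute ((q + q⋆ - 1)⁻¹ʳ * (q + q⋆ - 1)⁻¹ʳ) q :=
  SemiconjBy.mul_left hq.inverse_add_star_sub_one_mul_star hq.inverse_add_star_sub_one_mul

theorem commute_inverse_add_star_sub_one_sq_star (hq : IsIdempotentElem q) :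
    Commute ((q + q⋆ - 1)⁻¹ʳ * (q + q⋆ - 1)⁻¹ʳ) q⋆ :=
  SemiconjBy.mul_left hq.inverse_add_star_sub_one_mul hq.inverse_add_star_sub_one_mul_star

theorem mul_inverse_add_star_sub_one_eq (hq : IsIdempotentElem q) (hN : IsUnit (q + q⋆ - 1)) :
    q * (q + q⋆ - 1)⁻¹ʳ = q * q⋆ * ((q + q⋆ - 1)⁻¹ʳ * (q + q⋆ - 1)⁻¹ʳ) := by
  rw [← hq.mul_add_star_sub_one, ← mul_assoc, Ring.mul_inverse_cancel_right _ _ hN]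

theorem mul_inverse_add_star_sub_one_mul_self (hq : IsIdempotentElem q)
    (hN : IsUnit (q + q⋆ - 1)) : q * (q + q⋆ - 1)⁻¹ʳ * q = q := by
  rw [mul_assoc, hq.inverse_add_star_sub_one_mul, ← mul_assoc, ← hq.mul_add_star_sub_one,
    Ring.mul_inverse_cancel_right _ _ hN]

theorem isStarProjection_mul_inverse_add_star_sub_one (hq : IsIdempotentElem q)
    (hN : IsUnit (q + q⋆ - 1)) : IsStarProjection (q * (q + q⋆ - 1)⁻¹ʳ) where
  isIdempotentElem := by
    rw [IsIdempotentElem, ← mul_assoc, hq.mul_inverse_add_star_sub_one_mul_self hN]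
  isSelfAdjoint := by
    rw [IsSelfAdjoint, star_mul, (isSelfAdjoint_add_star_sub_one q).ringInverse.star_eq,
      hq.inverse_add_star_sub_one_mul_star]

theorem mul_inverse_add_star_sub_one_mul_star_mul_inverse (hq : IsIdempotentElem q)
    (hN : IsUnit (q + q⋆ - 1)) :
    q * (q + q⋆ - 1)⁻¹ʳ * (q⋆ * (q + q⋆ - 1)⁻¹ʳ) * (q * (q + q⋆ - 1)⁻¹ʳ) =
      q * q⋆ * ((q + q⋆ - 1)⁻¹ʳ * (q + q⋆ - 1)⁻¹ʳ) * ((q + q⋆ - 1)⁻¹ʳ * (q + q⋆ - 1)⁻¹ʳ) := by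
  set n := (q + q⋆ - 1)⁻¹ʳ
  have hnq : n * q⋆ = q * n := hq.inverse_add_star_sub_one_mul_star
  have hdq : (n * n) * q = q * (n * n) := hq.commute_inverse_add_star_sub_one_sq.eq
  have hqn : q * n = q * q⋆ * (n * n) := hq.mul_inverse_add_star_sub_one_eq hN
  calc q * n * (q⋆ * n) * (q * n) = q * (n * q⋆) * n * q * n := by simp only [mul_assoc]
    _ = q * q * (n * n * q) * n := by rw [hnq]; simp only [mul_assoc]
    _ = q * n * (n * n) := by rw [hdq, hq.eq, ← mul_assoc, hq.eq]; simp only [mul_assoc]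
    _ = q * q⋆ * (n * n) * (n * n) := by rw [hqn]

end IsIdempotentElem

theorem mul_inverse_add_star_sub_one_eq_of_isSelfAdjoint (hN : IsUnit (q + q⋆ - 1)) {p : R}
    (hp : IsSelfAdjoint p) (hpq : p * q = q) (hqp : q * p = p) : q * (q + q⋆ - 1)⁻¹ʳ = p := by
  have hpN : p * (q + q⋆ - 1) = q := by
    have hpq' : p * q⋆ = p := by rw [← hp.star_eq, ← star_mul, hqp]
    rw [mul_sub, mul_add, hpq, hpq', mul_one, add_sub_cancel_right]
  calc q * (q + q⋆ - 1)⁻¹ʳ = p * (q + q⋆ - 1) * (q + q⋆ - 1)⁻¹ʳ := by rw [hpN]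
    _ = p := Ring.mul_inverse_cancel_right _ _ hN

end StarRing

section CStarAlgebra

variable {A : Type*} [CStarAlgebra A] [PartialOrder A] [StarOrderedRing A]

theorem isUnit_one_add_mul_star_self (a : A) : IsUnit (1 + a * a⋆) :=
  CStarAlgebra.isUnit_of_le 1 (le_add_of_nonneg_right (mul_star_self_nonneg a))

theorem IsIdempotentElem.isUnit_add_star_sub_one {q : A} (hq : IsIdempotentElem q) :
    IsUnit (q + q⋆ - 1) :=
  isUnit_mul_self_iff.mp (hq.add_star_sub_one_mul_self ▸ isUnit_one_add_mul_star_self _)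

theorem Commute.cfcSqrt_left {a b : A} (h : Commute a b) : Commute (CFC.sqrt a) b := by
  rw [CFC.sqrt_eq_cfc]
  exact h.cfc_nnreal _

theorem mul_sqrt_eq_zero_of_mul_eq_zero {a c : A} (ha : 0 ≤ a) (h : c * a = 0) :
    c * CFC.sqrt a = 0 := by
  rw [← CStarRing.mul_star_self_eq_zero_iff, star_mul, (CFC.sqrt_nonneg a).isSelfAdjoint.star_eq]
  calc c * CFC.sqrt a * (CFC.sqrt a * c⋆) = c * (CFC.sqrt a * CFC.sqrt a) * c⋆ := by
        simp only [mul_assoc]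
    _ = 0 := by rw [CFC.sqrt_mul_sqrt_self a ha, h, zero_mul]

theorem IsIdempotentElem.mul_sqrt_mul_star_self {q : A} (hq : IsIdempotentElem q) :
    q * CFC.sqrt (q * q⋆) = CFC.sqrt (q * q⋆) := by
  have h : (1 - q) * CFC.sqrt (q * q⋆) = 0 :=
    mul_sqrt_eq_zero_of_mul_eq_zero (mul_star_self_nonneg q) <| by
      rw [← mul_assoc, sub_mul, hq.eq, one_mul, sub_self, zero_mul]
  rwa [sub_mul, one_mul, sub_eq_zero, eq_comm] at h

theorem IsIdempotentElem.commute_sqrt_mul_star_self_inverse_add_star_sub_one_sq {q : A}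
    (hq : IsIdempotentElem q) :
    Commute (CFC.sqrt (q * q⋆)) ((q + q⋆ - 1)⁻¹ʳ * (q + q⋆ - 1)⁻¹ʳ) :=
  (hq.commute_inverse_add_star_sub_one_sq.mul_right
    hq.commute_inverse_add_star_sub_one_sq_star).symm.cfcSqrt_left

theorem IsIdempotentElem.sqrt_mul_inverse_add_star_sub_one_mul_star_mul_inverse {q : A}
    (hq : IsIdempotentElem q) :
    CFC.sqrt (q * (q + q⋆ - 1)⁻¹ʳ * (q⋆ * (q + q⋆ - 1)⁻¹ʳ) * (q * (q + q⋆ - 1)⁻¹ʳ)) =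
      CFC.sqrt (q * q⋆) * ((q + q⋆ - 1)⁻¹ʳ * (q + q⋆ - 1)⁻¹ʳ) := by
  rw [hq.mul_inverse_add_star_sub_one_mul_star_mul_inverse hq.isUnit_add_star_sub_one]
  have hn : IsSelfAdjoint (q + q⋆ - 1)⁻¹ʳ := (isSelfAdjoint_add_star_sub_one q).ringInverse
  have hsd := hq.commute_sqrt_mul_star_self_inverse_add_star_sub_one_sq
  refine CFC.sqrt_unique ?_ (hsd.mul_nonneg (CFC.sqrt_nonneg _) hn.mul_self_nonneg)
  rw [hsd.symm.mul_mul_mul_comm, CFC.sqrt_mul_sqrt_self _ (mul_star_self_nonneg q),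
    mul_assoc (q * q⋆)]

theorem IsStrictlyPositive.ringInverse_nonneg {a : A} (ha : IsStrictlyPositive a) :
    0 ≤ a⁻¹ʳ := by
  rw [Ring.inverse_of_isUnit ha.isUnit]
  exact CFC.inv_nonneg_of_nonneg _ ha.nonneg

theorem exists_mul_star_eq_and_star_mul_eq {q s t : A} (hs : 0 ≤ s) (ht : 0 ≤ t)
    (hst : Commute s t) (hqs : q * s = s) (hqq : q * q⋆ = s * s) :
    ∃ v : A, v * v⋆ = (2 : ℂ)⁻¹ • ((s + q⋆) * t * (s + 1)⁻¹ʳ * (s + q)) ∧ v⋆ * v = t * s := by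
  have hs1 : IsStrictlyPositive (s + 1) := IsStrictlyPositive.nonneg_add hs isStrictlyPositive_one
  have hr : 0 ≤ (s + 1)⁻¹ʳ := hs1.ringInverse_nonneg
  have hrs : Commute (s + 1)⁻¹ʳ s :=
    ((Commute.refl s).add_left (Commute.one_left s)).ringInverse_left
  have hrt : Commute (s + 1)⁻¹ʳ t := (hst.add_left (Commute.one_left t)).ringInverse_left
  set e := (2⁻¹ : ℝ) • (t * (s + 1)⁻¹ʳ) with he_def
  have he : 0 ≤ e := smul_nonneg (by norm_num) (hrt.symm.mul_nonneg ht hr)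
  have hef : CFC.sqrt e * CFC.sqrt e = e := CFC.sqrt_mul_sqrt_self e he
  have hfs : Commute (CFC.sqrt e) s := ((hst.symm.mul_left hrs).smul_left _).cfcSqrt_left
  have hsq : s * q⋆ = s := by rw [← hs.isSelfAdjoint.star_eq, ← star_mul, hqs]
  have hstar : ((s + q⋆) * CFC.sqrt e)⋆ = CFC.sqrt e * (s + q) := by
    rw [star_mul, (CFC.sqrt_nonneg e).isSelfAdjoint.star_eq, star_add, star_star,
      hs.isSelfAdjoint.star_eq]
  refine ⟨(s + q⋆) * CFC.sqrt e, ?_, ?_⟩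
  · rw [hstar, mul_assoc, ← mul_assoc (CFC.sqrt e), hef, he_def, ← Complex.coe_smul]
    simp only [mul_smul_comm, smul_mul_assoc, mul_assoc]
    norm_num
  · have hsum : (s + q) * (s + q⋆) = (2 : ℝ) • (s * (s + 1)) := by
      rw [two_smul]
      simp only [mul_add, add_mul, hsq, hqs, hqq, mul_one]
      abel
    have hfX : Commute (CFC.sqrt e) (s * (s + 1)) := hfs.mul_right (hfs.add_right (.one_right _))
    rw [hstar]
    calc CFC.sqrt e * (s + q) * ((s + q⋆) * CFC.sqrt e)
        = CFC.sqrt e * ((2 : ℝ) • (s * (s + 1))) * CFC.sqrt e := by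
          rw [← hsum]; simp only [mul_assoc]
      _ = (2 : ℝ) • (e * (s * (s + 1))) := by
          rw [mul_smul_comm, smul_mul_assoc, mul_assoc, ← hfX.eq, ← mul_assoc, hef]
      _ = t * s * ((s + 1)⁻¹ʳ * (s + 1)) := by
          rw [he_def, smul_mul_assoc, smul_smul, mul_inv_cancel₀ two_ne_zero, one_smul,
            mul_assoc t, ← mul_assoc _ s, hrs.eq]
          simp only [mul_assoc]
      _ = t * s := by rw [Ring.inverse_mul_cancel _ hs1.isUnit, mul_one]

end CStarAlgebra

namespace QPP

variable {H : Type*} [NormedAddCommGroup H] [InnerProductSpace ℂ H] [CompleteSpace H]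

theorem absStarPinv_eq {Q : H →L[ℂ] H} (hQ : IsIdempotentElem Q) :
    absStarPinv Q = absStar Q * ((Q + Q⋆ - 1)⁻¹ʳ * (Q + Q⋆ - 1)⁻¹ʳ) := by
  rw [absStarPinv, rangeProj, rangeProj, star_star, add_comm Q⋆ Q]
  exact hQ.sqrt_mul_inverse_add_star_sub_one_mul_star_mul_inverse

theorem matchedProj_mvnEquiv_rangeProj {Q : H →L[ℂ] H} (hQ : IsIdempotentElem Q) :
    ∃ V : H →L[ℂ] H, V * V⋆ = matchedProj Q ∧ V⋆ * V = rangeProj Q := by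
  have hsd := hQ.commute_sqrt_mul_star_self_inverse_add_star_sub_one_sq
  have hst : Commute (absStar Q) (absStarPinv Q) := by
    rw [absStarPinv_eq hQ]
    exact (Commute.refl _).mul_right hsd
  obtain ⟨V, hVV, hVV'⟩ := exists_mul_star_eq_and_star_mul_eq (s := absStar Q)
    (t := absStarPinv Q) (CFC.sqrt_nonneg _) (CFC.sqrt_nonneg _) hst hQ.mul_sqrt_mul_star_self
    (CFC.sqrt_mul_sqrt_self _ (mul_star_self_nonneg Q)).symm
  refine ⟨V, hVV, hVV'.trans ?_⟩
  rw [absStarPinv_eq hQ, absStar, mul_assoc, ← hsd.eq, ← mul_assoc,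
    CFC.sqrt_mul_sqrt_self _ (mul_star_self_nonneg Q), rangeProj,
    hQ.mul_inverse_add_star_sub_one_eq hQ.isUnit_add_star_sub_one]

theorem isStarProjection_rangeProj {Q : H →L[ℂ] H} (hQ : IsIdempotentElem Q) :
    IsStarProjection (rangeProj Q) :=
  hQ.isStarProjection_mul_inverse_add_star_sub_one hQ.isUnit_add_star_sub_one

theorem rangeProj_mul_self {Q : H →L[ℂ] H} (hQ : IsIdempotentElem Q) :
    rangeProj Q * Q = Q :=
  hQ.mul_inverse_add_star_sub_one_mul_self hQ.isUnit_add_star_sub_one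

theorem mul_rangeProj {Q : H →L[ℂ] H} (hQ : IsIdempotentElem Q) :
    Q * rangeProj Q = rangeProj Q := by
  rw [rangeProj, ← mul_assoc, hQ.eq]

theorem isIdempotentElem_two_mul_rangeProj_sub {Q : H →L[ℂ] H} (hQ : IsIdempotentElem Q) :
    IsIdempotentElem (2 * rangeProj Q - Q) :=
  hQ.two_mul_sub (isStarProjection_rangeProj hQ).isIdempotentElem (rangeProj_mul_self hQ)
    (mul_rangeProj hQ)

theorem rangeProj_two_mul_rangeProj_sub {Q : H →L[ℂ] H} (hQ : IsIdempotentElem Q) :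
    rangeProj (2 * rangeProj Q - Q) = rangeProj Q := by
  have hP := isStarProjection_rangeProj hQ
  refine mul_inverse_add_star_sub_one_eq_of_isSelfAdjoint
    (isIdempotentElem_two_mul_rangeProj_sub hQ).isUnit_add_star_sub_one hP.isSelfAdjoint ?_ ?_
  · rw [mul_sub, two_mul, mul_add, hP.isIdempotentElem.eq, rangeProj_mul_self hQ]
  · rw [sub_mul, two_mul, add_mul, hP.isIdempotentElem.eq, mul_rangeProj hQ, add_sub_cancel_right]

end QPP

variable {H : Type*} [NormedAddCommGroup H] [InnerProductSpace ℂ H] [CompleteSpace H]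

/-- For every idempotent `Q`, the supplementary projection `s(Q)` and the range projection
`P_{ran Q}` are Murray-von Neumann equivalent: there is `V` with `V V* = s(Q)` and
`V* V = P_{ran Q}`. -/
theorem suppProj_mvnEquiv_rangeProj (Q : H →L[ℂ] H) (hQ : IsIdempotentElem Q) :
    ∃ V : H →L[ℂ] H, V * star V = QPP.suppProj Q ∧ star V * V = QPP.rangeProj Q := by
  obtain ⟨V, hVV, hVV'⟩ :=
    QPP.matchedProj_mvnEquiv_rangeProj (QPP.isIdempotentElem_two_mul_rangeProj_sub hQ)
  exact ⟨V, hVV, hVV'.trans (QPP.rangeProj_two_mul_rangeProj_sub hQ)⟩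

end
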